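/- Let p > 2 and let (f∘T^j)_{j≥0} be a strictly stationary sequence whose τ-dependence coefficients τ(i) and strong mixing coefficients α(i) satisfy τ(i) ≤ 2∫_0^{2α(i)} Q_f(u)du for all i. Then for every t > 0, t^{p-1} ∫_0^1 Q_f(u) 1{ ((τ/2)^{-1} ∘ G_f^{-1})(u) · Q_f(u) > t } du ≤ t^{p-1} ∫_0^1 Q_f(u/2) 1{ α^{-1}(u/2) Q_f(u/2) > t } du. In particular, lim_{t→∞} t^{p-1} ∫_0^1 Q_f(u) 1{α^{-1}(u)Q_f(u) > t} du = 0 implies lim_{t→∞} t^{p-1} ∫_0^1 Q_f(u) 1{((τ/2)^{-1}∘G_f^{-1})(u) Q_f(u) > t} du = 0. -/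
import Mathlib


open MeasureTheory ProbabilityTheory Filter Set
open scoped ENNReal NNReal

noncomputable section

namespace Stmt8

variable {Ω : Type} [mΩ : MeasurableSpace Ω]

/-- Quantile function `Q_f(u) = inf{t : μ{|f| > t} ≤ u}` of `|f|`. -/
def Qf (μ : Measure Ω) (f : Ω → ℝ) (u : ℝ) : ℝ :=
  sInf {t : ℝ | 0 ≤ t ∧ μ {x | t < |f x|} ≤ ENNReal.ofReal u}

/-- A regular conditional distribution of `Y` given the sub-σ-algebra `M`, evaluated at `ω`. -/
def rcd (μ : Measure Ω) [IsFiniteMeasure μ] (M : MeasurableSpace Ω) (Y : Ω → ℝ) (ω : Ω) :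
    Measure ℝ :=
  (@condDistrib Ω Ω ℝ _ _ _ mΩ M Y id μ _).toFun ω

/-- The τ-dependence coefficient `τ(M, Y)` of a real random variable `Y` given `M`. -/
def tauReal (μ : Measure Ω) [hfin : IsFiniteMeasure μ] (M : MeasurableSpace Ω) (Y : Ω → ℝ) : ℝ :=
  ∫ ω, sSup {r : ℝ | ∃ h : ℝ → ℝ, LipschitzWith 1 h ∧
    r = |(∫ y, h y ∂(@rcd Ω mΩ μ hfin M Y ω)) - ∫ y, h y ∂(@Measure.map Ω ℝ mΩ _ Y μ)|} ∂μ

/-- The τ-dependence coefficient `τ(M, X)` of an `ℝ^l`-valued random variable `X`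
(with the `ℓ¹`-norm on `ℝ^l`) given `M`. -/
def tauVec (μ : Measure Ω) [hfin : IsFiniteMeasure μ] (M : MeasurableSpace Ω) {l : ℕ}
    (X : Ω → Fin l → ℝ) : ℝ :=
  sSup {r : ℝ | ∃ h : (Fin l → ℝ) → ℝ,
    (∀ x y : Fin l → ℝ, |h x - h y| ≤ ∑ i, |x i - y i|) ∧
    r = @tauReal Ω mΩ μ hfin M (fun ω => h (X ω))}

/-- σ-algebra generated by `f ∘ T^k`, `k ≤ p`. -/
def pastσ (f : Ω → ℝ) (T : Ω → Ω) (p : ℕ) : MeasurableSpace Ω :=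
  ⨆ (k : ℕ) (_ : k ≤ p), MeasurableSpace.comap (fun x => f (T^[k] x)) inferInstance

/-- σ-algebra generated by `f ∘ T^k`, `k ≥ q`. -/
def futureσ (f : Ω → ℝ) (T : Ω → Ω) (q : ℕ) : MeasurableSpace Ω :=
  ⨆ (k : ℕ) (_ : q ≤ k), MeasurableSpace.comap (fun x => f (T^[k] x)) inferInstance

/-- The τ-dependence coefficients `τ(i)` of the sequence `(f ∘ T^j)_{j ≥ 0}`. -/
def tauSeq (μ : Measure Ω) [IsFiniteMeasure μ] (f : Ω → ℝ) (T : Ω → Ω) (i : ℕ) : ℝ :=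
  sSup {r : ℝ | ∃ (p l : ℕ) (hl : 0 < l) (j : Fin l → ℕ), 1 ≤ p ∧ StrictMono j ∧
    p + i ≤ j ⟨0, hl⟩ ∧
    r = (1 / (l : ℝ)) * tauVec μ (pastσ f T p) (fun ω k => f (T^[j k] ω))}

/-- Strong (Rosenblatt) mixing coefficients of the sequence `(f ∘ T^j)_j`. -/
def alphaMix (μ : Measure Ω) (f : Ω → ℝ) (T : Ω → Ω) (n : ℕ) : ℝ :=
  sSup {r : ℝ | ∃ (p : ℕ) (A B : Set Ω), MeasurableSet[pastσ f T p] A ∧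
    MeasurableSet[futureσ f T (p + n)] B ∧
    r = |(μ (A ∩ B)).toReal - (μ A).toReal * (μ B).toReal|}

/-- `(τ/2)^{-1}(v) = inf{k ∈ ℕ : τ(k)/2 ≤ v}`, valued in `ℝ≥0∞`. -/
def tauInv (τ : ℕ → ℝ) (v : ℝ) : ℝ≥0∞ :=
  ⨅ (k : ℕ) (_ : τ k / 2 ≤ v), (k : ℝ≥0∞)

/-- `α^{-1}(w) = inf{k ∈ ℕ : α(k) ≤ w}`, valued in `ℝ≥0∞`. -/
def alphaInv (α : ℕ → ℝ) (w : ℝ) : ℝ≥0∞ :=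
  ⨅ (k : ℕ) (_ : α k ≤ w), (k : ℝ≥0∞)

/-- `G_f^{-1}(x) = ∫_0^x Q_f(u) du`. -/
def Ginv (Q : ℝ → ℝ) (x : ℝ) : ℝ :=
  ∫ u in Set.Ioo (0 : ℝ) x, Q u

lemma Qf_nonneg (μ : Measure Ω) (f : Ω → ℝ) (u : ℝ) : 0 ≤ Qf μ f u :=
  Real.sInf_nonneg fun _ hx => hx.1

lemma Qf_le (μ : Measure Ω) (f : Ω → ℝ) {t u : ℝ} (ht : 0 ≤ t)
    (h : μ {x | t < |f x|} ≤ ENNReal.ofReal u) : Qf μ f u ≤ t :=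
  csInf_le ⟨0, fun _ hx => hx.1⟩ ⟨ht, h⟩

lemma Qf_set_nonempty (μ : Measure Ω) [IsProbabilityMeasure μ] {f : Ω → ℝ}
    (hf : Measurable f) {u : ℝ} (hu : 0 < u) :
    {t : ℝ | 0 ≤ t ∧ μ {x | t < |f x|} ≤ ENNReal.ofReal u}.Nonempty := by
  have hmeas : ∀ n : ℕ, NullMeasurableSet {x | (n : ℝ) < |f x|} μ := fun n =>
    (measurableSet_lt measurable_const hf.abs).nullMeasurableSet
  have hanti : Antitone fun n : ℕ => {x | (n : ℝ) < |f x|} := by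
    intro m n hmn x hx
    simp only [Set.mem_setOf_eq] at hx ⊢
    exact lt_of_le_of_lt (by exact_mod_cast hmn) hx
  have hempty : (⋂ n : ℕ, {x | (n : ℝ) < |f x|}) = ∅ := by
    ext x
    simp only [Set.mem_iInter, Set.mem_setOf_eq, Set.mem_empty_iff_false, iff_false, not_forall,
      not_lt]
    exact ⟨⌈|f x|⌉₊, Nat.le_ceil _⟩
  have htend : Tendsto (fun n : ℕ => μ {x | (n : ℝ) < |f x|}) atTop (nhds 0) := by
    have := tendsto_measure_iInter_atTop hmeas hanti ⟨0, measure_ne_top μ _⟩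
    rwa [hempty, measure_empty] at this
  have := htend.eventually_lt_const (ENNReal.ofReal_pos.2 hu)
  obtain ⟨n, hn⟩ := this.exists
  exact ⟨n, n.cast_nonneg, hn.le⟩

lemma Qf_anti (μ : Measure Ω) [IsProbabilityMeasure μ] {f : Ω → ℝ} (hf : Measurable f)
    {a b : ℝ} (ha : 0 < a) (hab : a ≤ b) : Qf μ f b ≤ Qf μ f a :=
  csInf_le_csInf ⟨0, fun _ hx => hx.1⟩ (Qf_set_nonempty μ hf ha)
    (fun t ht => ⟨ht.1, ht.2.trans (ENNReal.ofReal_le_ofReal hab)⟩)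

lemma Qf_eq_zero (μ : Measure Ω) [IsProbabilityMeasure μ] (f : Ω → ℝ) {u : ℝ} (hu : 1 ≤ u) :
    Qf μ f u = 0 :=
  le_antisymm (Qf_le μ f le_rfl (prob_le_one.trans (ENNReal.one_le_ofReal.2 hu)))
    (Qf_nonneg μ f u)

lemma integrableOn_Qf_mul (μ : Measure Ω) [IsProbabilityMeasure μ] {f : Ω → ℝ}
    (hf : Measurable f) (hint : Integrable f μ) {c : ℝ} (hc : 0 < c) :
    IntegrableOn (fun u => Qf μ f (c * u)) (Set.Ioo (0 : ℝ) 1) volume := by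
  have hanti : AntitoneOn (fun u => Qf μ f (c * u)) (Set.Ioo (0 : ℝ) 1) := by
    intro a ha b hb hab
    exact Qf_anti μ hf (mul_pos hc ha.1) (mul_le_mul_of_nonneg_left hab hc.le)
  have haem : AEMeasurable (fun u => Qf μ f (c * u)) (volume.restrict (Set.Ioo (0 : ℝ) 1)) :=
    aemeasurable_restrict_of_antitoneOn measurableSet_Ioo hanti
  constructor
  · exact haem.aestronglyMeasurable
  · rw [hasFiniteIntegral_iff_norm]
    have h1 : ∀ u : ℝ, ENNReal.ofReal ‖Qf μ f (c * u)‖ = ENNReal.ofReal (Qf μ f (c * u)) := by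
      intro u; rw [Real.norm_eq_abs, abs_of_nonneg (Qf_nonneg μ f _)]
    simp_rw [h1]
    rw [lintegral_eq_lintegral_meas_lt _ (Filter.Eventually.of_forall fun u => Qf_nonneg μ f _)
      haem]
    have hbound : ∀ t ∈ Set.Ioi (0 : ℝ),
        (volume.restrict (Set.Ioo (0 : ℝ) 1)) {u : ℝ | t < Qf μ f (c * u)} ≤
          μ {x | t < |f x|} / ENNReal.ofReal c := by
      intro t ht
      rw [Measure.restrict_apply' measurableSet_Ioo]
      have hsub : {u : ℝ | t < Qf μ f (c * u)} ∩ Set.Ioo (0 : ℝ) 1 ⊆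
          Set.Ioo 0 ((μ {x | t < |f x|}).toReal / c) := by
        rintro u ⟨hu1, hu2⟩
        refine ⟨hu2.1, ?_⟩
        have hnot : ¬ μ {x | t < |f x|} ≤ ENNReal.ofReal (c * u) := fun hle =>
          absurd (Qf_le μ f ht.le hle) (not_le.2 hu1)
        have hlt : ENNReal.ofReal (c * u) < μ {x | t < |f x|} := not_le.1 hnot
        have := (ENNReal.ofReal_lt_iff_lt_toReal (mul_pos hc hu2.1).le
          (measure_ne_top μ _)).1 hlt
        rw [lt_div_iff₀ hc, mul_comm]
        exact this
      refine (measure_mono hsub).trans ?_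
      rw [Real.volume_Ioo, sub_zero, ENNReal.ofReal_div_of_pos hc,
        ENNReal.ofReal_toReal (measure_ne_top μ _)]
    have hle : ∫⁻ t in Set.Ioi (0 : ℝ),
        (volume.restrict (Set.Ioo (0 : ℝ) 1)) {u : ℝ | t < Qf μ f (c * u)} ≤
        ∫⁻ t in Set.Ioi (0 : ℝ), μ {x | t < |f x|} / ENNReal.ofReal c := by
      refine lintegral_mono_ae ?_
      filter_upwards [ae_restrict_mem measurableSet_Ioi] with t ht using hbound t ht
    refine lt_of_le_of_lt hle ?_
    simp_rw [ENNReal.div_eq_inv_mul]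
    rw [lintegral_const_mul' _ _ (by simp [ENNReal.inv_ne_top, ENNReal.ofReal_pos.2 hc,
      (ENNReal.ofReal_pos.2 hc).ne'])]
    have hlayer : ∫⁻ t in Set.Ioi (0 : ℝ), μ {x | t < |f x|} =
        ∫⁻ x, ENNReal.ofReal |f x| ∂μ :=
      (lintegral_eq_lintegral_meas_lt μ (Filter.Eventually.of_forall fun x => abs_nonneg _)
        hf.abs.aemeasurable).symm
    rw [hlayer]
    refine ENNReal.mul_lt_top ?_ ?_
    · exact ENNReal.inv_lt_top.2 (ENNReal.ofReal_pos.2 hc)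
    · have : ∫⁻ x, ENNReal.ofReal |f x| ∂μ = ∫⁻ x, (‖f x‖₊ : ℝ≥0∞) ∂μ :=
        lintegral_congr fun x => (Real.enorm_eq_ofReal_abs (f x)).symm
      rw [this]
      exact hint.2


lemma integrableOn_Qf_Ioo (μ : Measure Ω) [IsProbabilityMeasure μ] {f : Ω → ℝ}
    (hf : Measurable f) (hint : Integrable f μ) (y : ℝ) :
    IntegrableOn (Qf μ f) (Set.Ioo (0 : ℝ) y) volume := by
  have h1 : IntegrableOn (Qf μ f) (Set.Ioo (0 : ℝ) 1) volume := by
    have := integrableOn_Qf_mul μ hf hint (c := 1) one_pos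
    simpa using this
  rcases le_or_gt y 1 with hy | hy
  · exact h1.mono_set (Set.Ioo_subset_Ioo le_rfl hy)
  · have h2 : IntegrableOn (Qf μ f) (Set.Ico (1 : ℝ) y) volume := by
      refine (integrableOn_zero : IntegrableOn (fun _ => (0:ℝ)) (Set.Ico (1:ℝ) y) volume).congr_fun ?_ measurableSet_Ico
      intro x hx
      exact (Qf_eq_zero μ f hx.1).symm
    exact (h1.union h2).mono_set (fun x hx => by
      rcases lt_or_ge x 1 with h | h
      · exact Or.inl ⟨hx.1, h⟩
      · exact Or.inr ⟨h, hx.2⟩)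

lemma Ginv_mono (μ : Measure Ω) [IsProbabilityMeasure μ] {f : Ω → ℝ}
    (hf : Measurable f) (hint : Integrable f μ) : Monotone (Ginv (Qf μ f)) := by
  intro a b hab
  exact setIntegral_mono_set (integrableOn_Qf_Ioo μ hf hint b)
    (Filter.Eventually.of_forall fun u => Qf_nonneg μ f u)
    (HasSubset.Subset.eventuallyLE (Set.Ioo_subset_Ioo le_rfl hab))

lemma tauInv_anti (τ : ℕ → ℝ) : Antitone (tauInv τ) := by
  intro a b hab
  exact le_iInf fun k => le_iInf fun hk => iInf_le_of_le k (iInf_le_of_le (hk.trans hab) le_rfl)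

lemma alphaInv_anti (α : ℕ → ℝ) : Antitone (alphaInv α) := by
  intro a b hab
  exact le_iInf fun k => le_iInf fun hk => iInf_le_of_le k (iInf_le_of_le (hk.trans hab) le_rfl)

/-- Measurability and integrability of the truncated quantile integrands. -/
lemma integrableOn_aux (μ : Measure Ω) [IsProbabilityMeasure μ] {f : Ω → ℝ}
    (hf : Measurable f) (hint : Integrable f μ) (φ : ℝ → ℝ≥0∞)
    (hφ : ∀ a b : ℝ, 0 < a → a ≤ b → φ b ≤ φ a) {c : ℝ} (hc : 0 < c) (t : ℝ) :
    IntegrableOn (fun u => if ENNReal.ofReal t < φ u * ENNReal.ofReal (Qf μ f (c * u))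
      then Qf μ f (c * u) else 0) (Set.Ioo (0 : ℝ) 1) volume := by
  have hQae : AEMeasurable (fun u => Qf μ f (c * u)) (volume.restrict (Set.Ioo (0 : ℝ) 1)) := by
    refine aemeasurable_restrict_of_antitoneOn measurableSet_Ioo ?_
    intro a ha b hb hab
    exact Qf_anti μ hf (mul_pos hc ha.1) (mul_le_mul_of_nonneg_left hab hc.le)
  set H' : ℝ → ℝ≥0∞ := fun u => if 0 < u then φ u * ENNReal.ofReal (Qf μ f (c * u)) else ⊤
    with hH'
  have hH'anti : Antitone H' := by
    intro a b hab
    by_cases ha : 0 < a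
    · have hb : 0 < b := lt_of_lt_of_le ha hab
      simp only [hH', if_pos ha, if_pos hb]
      exact mul_le_mul' (hφ a b ha hab)
        (ENNReal.ofReal_le_ofReal
          (Qf_anti μ hf (mul_pos hc ha) (mul_le_mul_of_nonneg_left hab hc.le)))
    · simp only [hH', if_neg ha]
      exact le_top
  have hH'meas : Measurable H' := hH'anti.measurable
  set q : ℝ → ℝ := hQae.mk _ with hq
  have hqmeas : Measurable q := hQae.measurable_mk
  have hF'meas : Measurable (fun u => if ENNReal.ofReal t < H' u then q u else 0) := by
    refine Measurable.ite ?_ hqmeas measurable_const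
    exact measurableSet_lt measurable_const hH'meas
  have haesm : AEStronglyMeasurable
      (fun u => if ENNReal.ofReal t < φ u * ENNReal.ofReal (Qf μ f (c * u))
        then Qf μ f (c * u) else 0) (volume.restrict (Set.Ioo (0 : ℝ) 1)) := by
    refine hF'meas.aestronglyMeasurable.congr ?_
    filter_upwards [ae_restrict_mem measurableSet_Ioo, hQae.ae_eq_mk] with u hu hu2
    show (if ENNReal.ofReal t < H' u then q u else 0) =
      (if ENNReal.ofReal t < φ u * ENNReal.ofReal (Qf μ f (c * u)) then Qf μ f (c * u) else 0)
    have h1 : H' u = φ u * ENNReal.ofReal (Qf μ f (c * u)) := if_pos hu.1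
    have h2 : q u = Qf μ f (c * u) := hu2.symm
    rw [h1, h2]
  refine Integrable.mono' (integrableOn_Qf_mul μ hf hint hc) haesm ?_
  refine Filter.Eventually.of_forall fun u => ?_
  by_cases h : ENNReal.ofReal t < φ u * ENNReal.ofReal (Qf μ f (c * u))
  · rw [if_pos h, Real.norm_eq_abs, abs_of_nonneg (Qf_nonneg μ f _)]
  · rw [if_neg h, norm_zero]
    exact Qf_nonneg μ f _


lemma integral_comp_half (G : ℝ → ℝ) :
    ∫ u in Set.Ioo (0 : ℝ) 1, G (u / 2) = 2 * ∫ v in Set.Ioo (0 : ℝ) (1 / 2), G v := by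
  rw [← integral_indicator measurableSet_Ioo, ← integral_indicator measurableSet_Ioo]
  have hkey : (Set.Ioo (0 : ℝ) 1).indicator (fun u => G (u / 2)) =
      fun u => (Set.Ioo (0 : ℝ) (1 / 2)).indicator G (u / 2) := by
    funext u
    by_cases h : u ∈ Set.Ioo (0 : ℝ) 1
    · have h' : u / 2 ∈ Set.Ioo (0 : ℝ) (1 / 2) := by
        obtain ⟨h1, h2⟩ := h
        exact ⟨by linarith, by linarith⟩
      rw [Set.indicator_of_mem h, Set.indicator_of_mem h']
    · have h' : u / 2 ∉ Set.Ioo (0 : ℝ) (1 / 2) := by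
        intro hc
        obtain ⟨h1, h2⟩ := hc
        exact h ⟨by linarith, by linarith⟩
      rw [Set.indicator_of_notMem h, Set.indicator_of_notMem h']
  rw [hkey, MeasureTheory.Measure.integral_comp_div ((Set.Ioo (0 : ℝ) (1 / 2)).indicator G) 2,
    show |(2 : ℝ)| = 2 from abs_of_pos two_pos, smul_eq_mul]

/-- **Inequality (3.6) and proof of Corollary 2.2.** If `τ(i) ≤ 2∫_0^{2α(i)} Q_f(u) du`
for all `i`, then for every `t > 0`,
`t^{p-1} ∫_0^1 Q_f(u) 1{((τ/2)^{-1}∘G_f^{-1})(u) Q_f(u) > t} du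
  ≤ t^{p-1} ∫_0^1 Q_f(u/2) 1{α^{-1}(u/2) Q_f(u/2) > t} du`;
in particular the α-condition implies the τ-condition. -/
theorem tau_condition_of_alpha_condition
    (μ : Measure Ω) [IsProbabilityMeasure μ] (T : Ω → Ω) (f : Ω → ℝ) (p : ℝ)
    (hp : 2 < p) (hT : MeasurePreserving T μ μ) (hf : Measurable f)
    (hint : Integrable f μ)
    (hcomp : ∀ i : ℕ, tauSeq μ f T i ≤
      2 * ∫ u in Set.Ioo (0 : ℝ) (2 * alphaMix μ f T i), Qf μ f u) :
    (∀ t : ℝ, 0 < t →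
      t ^ (p - 1) *
        (∫ u in Set.Ioo (0 : ℝ) 1,
          (if ENNReal.ofReal t <
              tauInv (tauSeq μ f T) (Ginv (Qf μ f) u) * ENNReal.ofReal (Qf μ f u)
            then Qf μ f u else 0)) ≤
      t ^ (p - 1) *
        (∫ u in Set.Ioo (0 : ℝ) 1,
          (if ENNReal.ofReal t <
              alphaInv (alphaMix μ f T) (u / 2) * ENNReal.ofReal (Qf μ f (u / 2))
            then Qf μ f (u / 2) else 0))) ∧
    (Tendsto
        (fun t : ℝ => t ^ (p - 1) *
          ∫ u in Set.Ioo (0 : ℝ) 1,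
            (if ENNReal.ofReal t <
                alphaInv (alphaMix μ f T) u * ENNReal.ofReal (Qf μ f u)
              then Qf μ f u else 0))
        atTop (nhds 0) →
      Tendsto
        (fun t : ℝ => t ^ (p - 1) *
          ∫ u in Set.Ioo (0 : ℝ) 1,
            (if ENNReal.ofReal t <
                tauInv (tauSeq μ f T) (Ginv (Qf μ f) u) * ENNReal.ofReal (Qf μ f u)
              then Qf μ f u else 0))
        atTop (nhds 0)) := by
  have hφ1 : ∀ a b : ℝ, 0 < a → a ≤ b →
      tauInv (tauSeq μ f T) (Ginv (Qf μ f) b) ≤ tauInv (tauSeq μ f T) (Ginv (Qf μ f) a) :=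
    fun a b _ hab => tauInv_anti _ (Ginv_mono μ hf hint hab)
  have hφ2 : ∀ a b : ℝ, 0 < a → a ≤ b →
      alphaInv (alphaMix μ f T) (b / 2) ≤ alphaInv (alphaMix μ f T) (a / 2) :=
    fun a b _ hab => alphaInv_anti _ (by linarith)
  have hφ3 : ∀ a b : ℝ, 0 < a → a ≤ b →
      alphaInv (alphaMix μ f T) b ≤ alphaInv (alphaMix μ f T) a :=
    fun a b _ hab => alphaInv_anti _ hab
  have int1 : ∀ t : ℝ, IntegrableOn
      (fun u => if ENNReal.ofReal t <
          tauInv (tauSeq μ f T) (Ginv (Qf μ f) u) * ENNReal.ofReal (Qf μ f u)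
        then Qf μ f u else 0) (Set.Ioo (0 : ℝ) 1) volume := by
    intro t
    have := integrableOn_aux μ hf hint
      (fun u => tauInv (tauSeq μ f T) (Ginv (Qf μ f) u)) hφ1 one_pos t
    simpa using this
  have int2 : ∀ t : ℝ, IntegrableOn
      (fun u => if ENNReal.ofReal t <
          alphaInv (alphaMix μ f T) (u / 2) * ENNReal.ofReal (Qf μ f (u / 2))
        then Qf μ f (u / 2) else 0) (Set.Ioo (0 : ℝ) 1) volume := by
    intro t
    have := integrableOn_aux μ hf hint
      (fun u => alphaInv (alphaMix μ f T) (u / 2)) hφ2 (c := 2⁻¹) (by norm_num) t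
    simpa [inv_mul_eq_div] using this
  have int3 : ∀ t : ℝ, IntegrableOn
      (fun u => if ENNReal.ofReal t <
          alphaInv (alphaMix μ f T) u * ENNReal.ofReal (Qf μ f u)
        then Qf μ f u else 0) (Set.Ioo (0 : ℝ) 1) volume := by
    intro t
    have := integrableOn_aux μ hf hint
      (fun u => alphaInv (alphaMix μ f T) u) hφ3 one_pos t
    simpa using this
  have key : ∀ t : ℝ,
      (∫ u in Set.Ioo (0 : ℝ) 1,
        (if ENNReal.ofReal t <
            tauInv (tauSeq μ f T) (Ginv (Qf μ f) u) * ENNReal.ofReal (Qf μ f u)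
          then Qf μ f u else 0)) ≤
      ∫ u in Set.Ioo (0 : ℝ) 1,
        (if ENNReal.ofReal t <
            alphaInv (alphaMix μ f T) (u / 2) * ENNReal.ofReal (Qf μ f (u / 2))
          then Qf μ f (u / 2) else 0) := by
    intro t
    refine setIntegral_mono_on (int1 t) (int2 t) measurableSet_Ioo fun u hu => ?_
    by_cases h : ENNReal.ofReal t <
        tauInv (tauSeq μ f T) (Ginv (Qf μ f) u) * ENNReal.ofReal (Qf μ f u)
    · rw [if_pos h]
      have hu0 : (0 : ℝ) < u := hu.1
      have hQ : Qf μ f u ≤ Qf μ f (u / 2) := Qf_anti μ hf (by linarith) (by linarith)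
      have hτα : tauInv (tauSeq μ f T) (Ginv (Qf μ f) u) ≤
          alphaInv (alphaMix μ f T) (u / 2) := by
        refine le_iInf fun k => le_iInf fun hk => ?_
        refine iInf_le_of_le k (iInf_le_of_le ?_ le_rfl)
        have h1 : tauSeq μ f T k / 2 ≤
            ∫ v in Set.Ioo (0 : ℝ) (2 * alphaMix μ f T k), Qf μ f v := by
          linarith [hcomp k]
        have h2 : (2 : ℝ) * alphaMix μ f T k ≤ u := by linarith
        exact h1.trans (setIntegral_mono_set (integrableOn_Qf_Ioo μ hf hint u)
          (Filter.Eventually.of_forall fun v => Qf_nonneg μ f v)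
          (HasSubset.Subset.eventuallyLE (Set.Ioo_subset_Ioo le_rfl h2)))
      have hcond : ENNReal.ofReal t <
          alphaInv (alphaMix μ f T) (u / 2) * ENNReal.ofReal (Qf μ f (u / 2)) :=
        lt_of_lt_of_le h (mul_le_mul' hτα (ENNReal.ofReal_le_ofReal hQ))
      rw [if_pos hcond]
      exact hQ
    · rw [if_neg h]
      by_cases h2 : ENNReal.ofReal t <
          alphaInv (alphaMix μ f T) (u / 2) * ENNReal.ofReal (Qf μ f (u / 2))
      · rw [if_pos h2]; exact Qf_nonneg μ f _
      · rw [if_neg h2]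
  have part1 : ∀ t : ℝ, 0 < t →
      t ^ (p - 1) *
        (∫ u in Set.Ioo (0 : ℝ) 1,
          (if ENNReal.ofReal t <
              tauInv (tauSeq μ f T) (Ginv (Qf μ f) u) * ENNReal.ofReal (Qf μ f u)
            then Qf μ f u else 0)) ≤
      t ^ (p - 1) *
        (∫ u in Set.Ioo (0 : ℝ) 1,
          (if ENNReal.ofReal t <
              alphaInv (alphaMix μ f T) (u / 2) * ENNReal.ofReal (Qf μ f (u / 2))
            then Qf μ f (u / 2) else 0)) :=
    fun t ht => mul_le_mul_of_nonneg_left (key t) (Real.rpow_nonneg ht.le _)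
  refine ⟨part1, ?_⟩
  intro hα
  have hub : ∀ᶠ t in atTop, (fun t : ℝ => t ^ (p - 1) *
      ∫ u in Set.Ioo (0 : ℝ) 1,
        (if ENNReal.ofReal t <
            tauInv (tauSeq μ f T) (Ginv (Qf μ f) u) * ENNReal.ofReal (Qf μ f u)
          then Qf μ f u else 0)) t ≤
      2 * (t ^ (p - 1) *
        ∫ u in Set.Ioo (0 : ℝ) 1,
          (if ENNReal.ofReal t <
              alphaInv (alphaMix μ f T) u * ENNReal.ofReal (Qf μ f u)
            then Qf μ f u else 0)) := by
    filter_upwards [eventually_ge_atTop (1 : ℝ)] with t ht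
    have ht0 : (0 : ℝ) < t := by linarith
    have hrp : (0 : ℝ) ≤ t ^ (p - 1) := Real.rpow_nonneg ht0.le _
    have e1 : (∫ u in Set.Ioo (0 : ℝ) 1,
        (if ENNReal.ofReal t <
            alphaInv (alphaMix μ f T) (u / 2) * ENNReal.ofReal (Qf μ f (u / 2))
          then Qf μ f (u / 2) else 0)) =
        2 * ∫ v in Set.Ioo (0 : ℝ) (1 / 2),
          (if ENNReal.ofReal t <
              alphaInv (alphaMix μ f T) v * ENNReal.ofReal (Qf μ f v)
            then Qf μ f v else 0) :=
      integral_comp_half (fun v =>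
        if ENNReal.ofReal t < alphaInv (alphaMix μ f T) v * ENNReal.ofReal (Qf μ f v)
          then Qf μ f v else 0)
    have e2 : (∫ v in Set.Ioo (0 : ℝ) (1 / 2),
        (if ENNReal.ofReal t <
            alphaInv (alphaMix μ f T) v * ENNReal.ofReal (Qf μ f v)
          then Qf μ f v else 0)) ≤
        ∫ v in Set.Ioo (0 : ℝ) 1,
          (if ENNReal.ofReal t <
              alphaInv (alphaMix μ f T) v * ENNReal.ofReal (Qf μ f v)
            then Qf μ f v else 0) := by
      refine setIntegral_mono_set (int3 t) ?_ ?_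
      · refine Filter.Eventually.of_forall fun v => ?_
        show (0 : ℝ) ≤ if ENNReal.ofReal t <
            alphaInv (alphaMix μ f T) v * ENNReal.ofReal (Qf μ f v)
          then Qf μ f v else 0
        split_ifs
        · exact Qf_nonneg μ f _
        · exact le_rfl
      · exact HasSubset.Subset.eventuallyLE (Set.Ioo_subset_Ioo le_rfl (by norm_num))
    calc t ^ (p - 1) *
        ∫ u in Set.Ioo (0 : ℝ) 1,
          (if ENNReal.ofReal t <
              tauInv (tauSeq μ f T) (Ginv (Qf μ f) u) * ENNReal.ofReal (Qf μ f u)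
            then Qf μ f u else 0)
        ≤ t ^ (p - 1) *
          ∫ u in Set.Ioo (0 : ℝ) 1,
            (if ENNReal.ofReal t <
                alphaInv (alphaMix μ f T) (u / 2) * ENNReal.ofReal (Qf μ f (u / 2))
              then Qf μ f (u / 2) else 0) := part1 t ht0
      _ = t ^ (p - 1) * (2 * ∫ v in Set.Ioo (0 : ℝ) (1 / 2),
            (if ENNReal.ofReal t <
                alphaInv (alphaMix μ f T) v * ENNReal.ofReal (Qf μ f v)
              then Qf μ f v else 0)) := by rw [e1]
      _ ≤ t ^ (p - 1) * (2 * ∫ v in Set.Ioo (0 : ℝ) 1,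
            (if ENNReal.ofReal t <
                alphaInv (alphaMix μ f T) v * ENNReal.ofReal (Qf μ f v)
              then Qf μ f v else 0)) := by
            have h22 := mul_le_mul_of_nonneg_left e2 (by norm_num : (0:ℝ) ≤ 2)
            exact mul_le_mul_of_nonneg_left h22 hrp
      _ = 2 * (t ^ (p - 1) * ∫ v in Set.Ioo (0 : ℝ) 1,
            (if ENNReal.ofReal t <
                alphaInv (alphaMix μ f T) v * ENNReal.ofReal (Qf μ f v)
              then Qf μ f v else 0)) := by ring
  have hlb : ∀ᶠ t in atTop, (0 : ℝ) ≤ (fun t : ℝ => t ^ (p - 1) *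
      ∫ u in Set.Ioo (0 : ℝ) 1,
        (if ENNReal.ofReal t <
            tauInv (tauSeq μ f T) (Ginv (Qf μ f) u) * ENNReal.ofReal (Qf μ f u)
          then Qf μ f u else 0)) t := by
    filter_upwards [eventually_ge_atTop (1 : ℝ)] with t ht
    have ht0 : (0 : ℝ) < t := by linarith
    refine mul_nonneg (Real.rpow_nonneg ht0.le _) ?_
    refine setIntegral_nonneg measurableSet_Ioo fun u _ => ?_
    by_cases h : ENNReal.ofReal t <
        tauInv (tauSeq μ f T) (Ginv (Qf μ f) u) * ENNReal.ofReal (Qf μ f u)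
    · rw [if_pos h]; exact Qf_nonneg μ f _
    · rw [if_neg h]
  have h2A : Tendsto (fun t : ℝ => 2 * (t ^ (p - 1) *
      ∫ u in Set.Ioo (0 : ℝ) 1,
        (if ENNReal.ofReal t <
            alphaInv (alphaMix μ f T) u * ENNReal.ofReal (Qf μ f u)
          then Qf μ f u else 0))) atTop (nhds 0) := by
    simpa using hα.const_mul (2 : ℝ)
  exact tendsto_of_tendsto_of_tendsto_of_le_of_le' tendsto_const_nhds h2A hlb hub


end Stmt8

end
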